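/- Let R be a right hereditary ring, N a right R-module, and let C be the class of finitely presented R-modules M with Hom_R(M,N) = 0 = Ext^1_R(M,N). Given a short exact sequence 0 → A → B → C → 0 of finitely presented modules in which two of A, B, C belong to C, then so does the third. -/

import Mathlib

/-- `Ext¹_R(M, N) = 0`, expressed concretely: every short exact sequence
`0 → N → X → M → 0` splits. -/
def Ext1Vanishes (R : Type) [Ring R] (M N : Type) [AddCommGroup M] [Module R M]
    [AddCommGroup N] [Module R N] : Prop :=
  ∀ (X : Type) [AddCommGroup X] [Module R X] (i : N →ₗ[R] X) (p : X →ₗ[R] M),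
    Function.Injective i → Function.Surjective p →
    LinearMap.range i = LinearMap.ker p →
    ∃ s : M →ₗ[R] X, p ∘ₗ s = LinearMap.id

/-- Membership in the class `C` of modules left-perpendicular to `N`:
`Hom_R(M,N) = 0 = Ext¹_R(M,N)`. -/
def Perp (R : Type) [Ring R] (M N : Type) [AddCommGroup M] [Module R M]
    [AddCommGroup N] [Module R N] : Prop :=
  (∀ g : M →ₗ[R] N, g = 0) ∧ Ext1Vanishes R M N

/-- A ring is right hereditary if every ideal is projective as a module. -/
def IsRightHereditary (R : Type) [Ring R] : Prop :=
  ∀ I : Ideal R, Module.Projective R I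

/-!
The three implications are the pieces of the long exact sequence
`0 → Hom(C,N) → Hom(B,N) → Hom(A,N) → Ext¹(C,N) → Ext¹(B,N) → Ext¹(A,N) → Ext²(C,N)`,
made concrete by pulling extensions back and pushing them out. The one term the hypotheses do not
control is `Ext²(C,N)`, and it vanishes because `R` is hereditary: writing `B` as a quotient of
`Rⁿ`, the preimage of `A` is a submodule of `Rⁿ`, hence projective, so it is a projective
presentation of `A` whose relation module is the kernel of `Rⁿ → B`; maps from that kernel to `N`
extend to `Rⁿ` because `Ext¹(B,N) = 0`.
-/

open Function LinearMap

section Factorization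

variable {R : Type*} [Ring R] {K M N P : Type*} [AddCommGroup K] [Module R K]
  [AddCommGroup M] [Module R M] [AddCommGroup N] [Module R N] [AddCommGroup P] [Module R P]

theorem LinearMap.exists_comp_eq_of_ker_le {f : M →ₗ[R] N} (hf : Surjective f) {g : M →ₗ[R] P}
    (h : ker f ≤ ker g) : ∃ g' : N →ₗ[R] P, g' ∘ₗ f = g :=
  ⟨(ker f).liftQ g h ∘ₗ (f.quotKerEquivOfSurjective hf).symm.toLinearMap, by
    ext m
    rw [comp_apply, comp_apply, LinearEquiv.coe_coe, ← f.quotKerEquivOfSurjective_apply_mk hf,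
      LinearEquiv.symm_apply_apply, Submodule.liftQ_apply]⟩

theorem LinearMap.exists_comp_eq_of_range_le {f : N →ₗ[R] M} (hf : Injective f) {g : K →ₗ[R] M}
    (h : range g ≤ range f) : ∃ g' : K →ₗ[R] N, f ∘ₗ g' = g :=
  ⟨(LinearEquiv.ofInjective f hf).symm.toLinearMap ∘ₗ g.codRestrict (range f) fun k => h ⟨k, rfl⟩,
    by ext k; simp⟩

end Factorization

section Projective

variable {R : Type*} [Ring R] {K M P : Type*} [AddCommGroup K] [Module R K]
  [AddCommGroup M] [Module R M] [AddCommGroup P] [Module R P]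

theorem Module.Projective.of_exact [Module.Projective R K] [Module.Projective R P]
    {f : K →ₗ[R] M} {g : M →ₗ[R] P} (hfg : Exact f g) (hf : Function.Injective f)
    (hg : Surjective g) :
    Module.Projective R M := by
  obtain ⟨e, -, -⟩ := ((hfg.split_tfae hf hg).out 0 2).mp
    (g.exists_rightInverse_of_surjective (range_eq_top.mpr hg))
  exact .of_equiv e.symm

theorem Module.Projective.submodule_prod (hM : ∀ T : Submodule R M, Module.Projective R T)
    (hP : ∀ T : Submodule R P, Module.Projective R T) (S : Submodule R (M × P)) :
    Module.Projective R S := by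
  have := hP (S.comap (inr R M P))
  have := hM (S.map (fst R M P))
  refine .of_exact (f := (inr R M P).restrict (p := S.comap (inr R M P)) (q := S) fun _ hx => hx)
    (g := (fst R M P).submoduleMap S) ?_ ?_ ((fst R M P).submoduleMap_surjective S)
  · rintro ⟨⟨x, y⟩, hS⟩
    constructor
    · intro h
      have hx : x = 0 := congrArg Subtype.val h
      subst hx
      exact ⟨⟨y, hS⟩, rfl⟩
    · rintro ⟨y, hy⟩
      rw [← hy]
      rfl
  · intro y y' h
    exact Subtype.ext (congrArg (fun z : S => (z : M × P).2) h)

end Projective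

theorem IsRightHereditary.projective_submodule_pi {R : Type} [Ring R] (hR : IsRightHereditary R) :
    ∀ {n : ℕ} (S : Submodule R (Fin n → R)), Module.Projective R S
  | 0, _ => inferInstance
  | n + 1, S => by
    let e := Fin.consLinearEquiv R fun _ : Fin (n + 1) => R
    have := Module.Projective.submodule_prod hR hR.projective_submodule_pi
      (S.map (e.symm : (Fin (n + 1) → R) →ₗ[R] R × (Fin n → R)))
    exact .of_equiv (e.symm.submoduleMap S).symm

namespace Ext1Vanishes

variable {R : Type} [Ring R] {K M N X : Type} [AddCommGroup K] [Module R K] [AddCommGroup M]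
  [Module R M] [AddCommGroup N] [Module R N] [AddCommGroup X] [Module R X]

theorem exists_retraction (h : Ext1Vanishes R M N) (ι : N →ₗ[R] X) (q : X →ₗ[R] M)
    (hι : Injective ι) (hq : Surjective q) (hιq : range ι = ker q) :
    ∃ r : X →ₗ[R] N, r ∘ₗ ι = LinearMap.id :=
  (((exact_iff.mpr hιq.symm).split_tfae hι hq).out 0 1).mp (h X ι q hι hq hιq)

theorem exists_lift {Y : Type} [AddCommGroup Y] [Module R Y] (h : Ext1Vanishes R M N)
    (ι : N →ₗ[R] X) (q : X →ₗ[R] Y) (hι : Injective ι) (hq : Surjective q)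
    (hιq : range ι = ker q) (f : M →ₗ[R] Y) : ∃ t : M →ₗ[R] X, q ∘ₗ t = f := by
  have hex : Exact ι q := exact_iff.mpr hιq.symm
  let P : Submodule R (M × X) := ker (f ∘ₗ fst R M X - q ∘ₗ snd R M X)
  have mem_P : ∀ m x, (m, x) ∈ P ↔ f m = q x := fun m x => by simp [P, sub_eq_zero]
  let ιP : N →ₗ[R] P := (inr R M X ∘ₗ ι).codRestrict P fun n => by
    simp [mem_P, hex.apply_apply_eq_zero]
  let qP : P →ₗ[R] M := fst R M X ∘ₗ P.subtype
  have hιP : Injective ιP := fun n n' hn => hι (congrArg (fun x : P => (x : M × X).2) hn)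
  have hqP : Surjective qP := fun m => by
    obtain ⟨x, hx⟩ := hq (f m)
    exact ⟨⟨(m, x), (mem_P m x).2 hx.symm⟩, rfl⟩
  have hιqP : range ιP = ker qP := by
    ext ⟨⟨m, x⟩, hmx⟩
    constructor
    · rintro ⟨n, hn⟩
      rw [← hn]
      rfl
    · intro (hm : m = 0)
      subst hm
      obtain ⟨n, rfl⟩ := (hex x).mp (by simpa using ((mem_P 0 x).1 hmx).symm)
      exact ⟨n, rfl⟩
  obtain ⟨s, hs⟩ := h P ιP qP hιP hqP hιqP
  refine ⟨snd R M X ∘ₗ P.subtype ∘ₗ s, ext fun m => ?_⟩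
  have hsm : ((s m : P) : M × X).1 = m := congr($hs m)
  calc q ((s m : P) : M × X).2 = f ((s m : P) : M × X).1 := ((mem_P _ _).1 (s m).2).symm
    _ = f m := by rw [hsm]

theorem exists_extension {F : Type} [AddCommGroup F] [Module R F] (h : Ext1Vanishes R M N)
    (j : K →ₗ[R] F) (π : F →ₗ[R] M) (hj : Injective j) (hπ : Surjective π)
    (hjπ : range j = ker π) (ψ : K →ₗ[R] N) : ∃ θ : F →ₗ[R] N, θ ∘ₗ j = ψ := by
  have hex : Exact j π := exact_iff.mpr hjπ.symm
  let W : Submodule R (N × F) := range (ψ.prod (-j))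
  have mk_eq : ∀ k, W.mkQ (ψ k, 0) = W.mkQ (0, j k) := fun k =>
    (Submodule.Quotient.eq W).2 ⟨k, by simp⟩
  have hWπ : W ≤ ker (π ∘ₗ snd R N F) := by
    rintro _ ⟨k, rfl⟩
    simp [hex.apply_apply_eq_zero]
  let ιP : N →ₗ[R] (N × F) ⧸ W := W.mkQ ∘ₗ inl R N F
  let qP : (N × F) ⧸ W →ₗ[R] M := W.liftQ (π ∘ₗ snd R N F) hWπ
  have hιP : Injective ιP := by
    refine (injective_iff_map_eq_zero ιP).2 fun n hn => ?_
    obtain ⟨k, hk⟩ := (Submodule.Quotient.mk_eq_zero W).1 hn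
    obtain rfl : k = 0 := hj (by simpa using congrArg Prod.snd hk)
    simpa using (congrArg Prod.fst hk).symm
  have hqP : Surjective qP := fun m => by
    obtain ⟨f, rfl⟩ := hπ m
    exact ⟨W.mkQ (0, f), rfl⟩
  have hιqP : range ιP = ker qP := by
    ext z
    obtain ⟨⟨n, f⟩, rfl⟩ := W.mkQ_surjective z
    constructor
    · rintro ⟨n', hn'⟩
      rw [← hn']
      simp [ιP, qP]
    · intro (hf : π f = 0)
      obtain ⟨k, rfl⟩ := (hex f).mp hf
      refine ⟨n + ψ k, ?_⟩
      have := congrArg (W.mkQ (n, 0) + ·) (mk_eq k)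
      simp only [← map_add, Prod.mk_add_mk, add_zero, zero_add] at this
      exact this
  obtain ⟨r, hr⟩ := h.exists_retraction ιP qP hιP hqP hιqP
  refine ⟨r ∘ₗ W.mkQ ∘ₗ inr R N F, ext fun k => ?_⟩
  calc r (W.mkQ (0, j k)) = r (ιP (ψ k)) := by rw [← mk_eq]; rfl
    _ = ψ k := congr($hr (ψ k))

theorem of_projective_presentation {P : Type} [AddCommGroup P] [Module R P]
    [Module.Projective R P] (j : K →ₗ[R] P) (α : P →ₗ[R] M) (hα : Surjective α)
    (hjα : range j = ker α) (hext : ∀ ψ : K →ₗ[R] N, ∃ θ : P →ₗ[R] N, θ ∘ₗ j = ψ) :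
    Ext1Vanishes R M N := by
  intro X _ _ ι q hι hq hιq
  have hjα' : Exact j α := exact_iff.mpr hjα.symm
  have hιq' : Exact ι q := exact_iff.mpr hιq.symm
  obtain ⟨φ, hφ⟩ := Module.projective_lifting_property q α hq
  have hφj : range (φ ∘ₗ j) ≤ range ι := by
    rintro _ ⟨k, rfl⟩
    refine (hιq' _).mp ?_
    rw [LinearMap.comp_apply, ← LinearMap.comp_apply q φ, hφ, hjα'.apply_apply_eq_zero]
  obtain ⟨ψ, hψ⟩ := exists_comp_eq_of_range_le hι hφj
  obtain ⟨θ, hθ⟩ := hext ψ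
  obtain ⟨t, ht⟩ := exists_comp_eq_of_ker_le hα (g := φ - ι ∘ₗ θ) <| by
    rintro _ hk
    obtain ⟨k, rfl⟩ := (hjα' _).mp hk
    have h1 : θ (j k) = ψ k := congr($hθ k)
    have h2 : ι (ψ k) = φ (j k) := congr($hψ k)
    simp [h1, h2]
  refine ⟨t, (cancel_right hα).mp ?_⟩
  rw [LinearMap.comp_assoc, ht, comp_sub, hφ, ← LinearMap.comp_assoc,
    hιq'.linearMap_comp_eq_zero, zero_comp, sub_zero, LinearMap.id_comp]

end Ext1Vanishes

section Perp

variable {R : Type} [Ring R] {N A B C : Type} [AddCommGroup N] [Module R N] [AddCommGroup A]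
  [Module R A] [AddCommGroup B] [Module R B] [AddCommGroup C] [Module R C]
  {i : A →ₗ[R] B} {p : B →ₗ[R] C}

theorem perp_right_of_exact (hA : Perp R A N) (hB : Perp R B N) (hp : Surjective p)
    (hip : range i = ker p) : Perp R C N := by
  have hip' : Exact i p := exact_iff.mpr hip.symm
  refine ⟨fun g => (cancel_right hp).mp (by rw [hB.1 (g ∘ₗ p), zero_comp]),
    fun X _ _ ι q hι hq hιq => ?_⟩
  obtain ⟨t, ht⟩ := hB.2.exists_lift ι q hι hq hιq p
  have hti : range (t ∘ₗ i) ≤ range ι := by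
    rintro _ ⟨a, rfl⟩
    rw [hιq, mem_ker, LinearMap.comp_apply, ← LinearMap.comp_apply q, ht,
      hip'.apply_apply_eq_zero]
  obtain ⟨u, hu⟩ := exists_comp_eq_of_range_le hι hti
  have hpt : ker p ≤ ker t := by
    intro b hb
    obtain ⟨a, rfl⟩ := (hip' b).mp hb
    rw [mem_ker, ← LinearMap.comp_apply t i, ← hu, hA.1 u, comp_zero, LinearMap.zero_apply]
  obtain ⟨s, hs⟩ := exists_comp_eq_of_ker_le hp hpt
  exact ⟨s, (cancel_right hp).mp (by rw [LinearMap.comp_assoc, hs, ht, LinearMap.id_comp])⟩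

theorem perp_middle_of_exact (hA : Perp R A N) (hC : Perp R C N) (hi : Injective i)
    (hp : Surjective p) (hip : range i = ker p) : Perp R B N := by
  have hip' : Exact i p := exact_iff.mpr hip.symm
  refine ⟨fun g => ?_, fun X _ _ ι q hι hq hιq => ?_⟩
  · obtain ⟨g', hg'⟩ := exists_comp_eq_of_ker_le hp (g := g) <| by
      intro b hb
      obtain ⟨a, rfl⟩ := (hip' b).mp hb
      exact congr($(hA.1 (g ∘ₗ i)) a)
    rw [← hg', hC.1 g', zero_comp]
  have hιq' : Exact ι q := exact_iff.mpr hιq.symm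
  obtain ⟨σ, hσ⟩ := hA.2.exists_lift ι q hι hq hιq i
  have hqσ (a : A) : q (σ a) = i a := congr($hσ a)
  -- Lifting `i` to `σ` makes `X` an extension of `C` by `A × N`; extending the projection
  -- `A × N → N` along it yields a retraction of `ι`.
  have hj : Injective (σ.coprod ι) := by
    rw [injective_iff_map_eq_zero]
    rintro ⟨a, n⟩ h
    have hqh : i a = 0 := by simpa [hqσ, hιq'.apply_apply_eq_zero] using congrArg q h
    obtain rfl : a = 0 := hi (by simpa using hqh)
    obtain rfl : n = 0 := hι (by simpa using h)
    rfl
  have hjpq : range (σ.coprod ι) = ker (p ∘ₗ q) := by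
    ext x
    constructor
    · rintro ⟨⟨a, n⟩, rfl⟩
      simp [hqσ, hιq'.apply_apply_eq_zero, hip'.apply_apply_eq_zero]
    · intro (hx : p (q x) = 0)
      obtain ⟨a, ha⟩ := (hip' (q x)).mp hx
      obtain ⟨n, hn⟩ := (hιq' (x - σ a)).mp (by rw [map_sub, hqσ, ha, sub_self])
      exact ⟨(a, n), by simp [hn]⟩
  obtain ⟨θ, hθ⟩ :=
    hC.2.exists_extension (σ.coprod ι) (p ∘ₗ q) hj (hp.comp hq) hjpq (snd R A N)
  have hθι : θ ∘ₗ ι = LinearMap.id := ext fun n => by simpa using congr($hθ (0, n))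
  exact ((hιq'.split_tfae hι hq).out 0 1).mpr (Exists.intro θ hθι)

theorem Ext1Vanishes.of_injective_of_projective_comap {F : Type} [AddCommGroup F] [Module R F]
    (h : Ext1Vanishes R B N) (hi : Injective i) (π : F →ₗ[R] B) (hπ : Surjective π)
    [Module.Projective R ((range i).comap π)] : Ext1Vanishes R A N := by
  set F' := (range i).comap π
  obtain ⟨α, hα⟩ := exists_comp_eq_of_range_le hi (g := π ∘ₗ F'.subtype) <| by
    rintro _ ⟨f, rfl⟩
    exact f.2
  have hiα (f : F') : i (α f) = π f := congr($hα f)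
  have hK : ker π ≤ F' := fun f (hf : π f = 0) => ⟨0, by rw [map_zero, hf]⟩
  have hαsurj : Surjective α := fun a => by
    obtain ⟨f, hf⟩ := hπ (i a)
    exact ⟨⟨f, (⟨a, hf.symm⟩ : π f ∈ range i)⟩, hi (by rw [hiα]; exact hf)⟩
  have hKα : range (Submodule.inclusion hK) = ker α := by
    ext f
    rw [mem_ker, ← hi.eq_iff, hiα, map_zero]
    exact ⟨fun ⟨k, hk⟩ => hk ▸ k.2, fun hf => ⟨⟨f, hf⟩, rfl⟩⟩
  refine of_projective_presentation (Submodule.inclusion hK) α hαsurj hKα fun ψ => ?_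
  obtain ⟨θ, hθ⟩ := h.exists_extension (ker π).subtype π (ker π).injective_subtype hπ
    (Submodule.range_subtype _) ψ
  exact ⟨θ ∘ₗ F'.subtype, hθ⟩

theorem perp_left_of_exact (hR : IsRightHereditary R) [Module.Finite R B] (hB : Perp R B N)
    (hC : Perp R C N) (hi : Injective i) (hp : Surjective p) (hip : range i = ker p) :
    Perp R A N := by
  refine ⟨fun g => ?_, ?_⟩
  · obtain ⟨θ, hθ⟩ := hC.2.exists_extension i p hi hp hip g
    rw [← hθ, hB.1 θ, zero_comp]
  · obtain ⟨n, π, hπ⟩ := Module.Finite.exists_fin' R B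
    have := hR.projective_submodule_pi ((range i).comap π)
    exact hB.2.of_injective_of_projective_comap hi π hπ

end Perp

theorem stmt2 {R : Type} [Ring R] (hR : IsRightHereditary R)
    {N : Type} [AddCommGroup N] [Module R N]
    {A B C : Type} [AddCommGroup A] [Module R A] [AddCommGroup B] [Module R B]
    [AddCommGroup C] [Module R C]
    (hB : Module.FinitePresentation R B)
    (i : A →ₗ[R] B) (p : B →ₗ[R] C)
    (hi : Function.Injective i) (hp : Function.Surjective p)
    (hip : LinearMap.range i = LinearMap.ker p) :
    (Perp R A N → Perp R B N → Perp R C N) ∧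
    (Perp R A N → Perp R C N → Perp R B N) ∧
    (Perp R B N → Perp R C N → Perp R A N) :=
  ⟨fun hA' hB' => perp_right_of_exact hA' hB' hp hip,
    fun hA' hC' => perp_middle_of_exact hA' hC' hi hp hip,
    fun hB' hC' => perp_left_of_exact hR hB' hC' hi hp hip⟩
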